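/- Let X be an L1-predual and let (e_n*) be a sequence of distinct elements of ext(B_{X*}) such that e_i* ≠ −e_j* for all i, j. Then (e_n*) is isometrically equivalent to the usual ℓ1-basis; that is, ‖Σ_{i=1}^n a_i e_i*‖ = Σ_{i=1}^n |a_i| for all n and all scalars a₁, …, a_n. -/

import Mathlib

open NormedSpace MeasureTheory Filter Topology

/-- A real Banach space `X` is an `L₁`-predual if its dual is isometrically isomorphic
to `L₁(μ)` for some measure space. -/
def IsL1Predual (X : Type*) [NormedAddCommGroup X] [NormedSpace ℝ X] : Prop :=
  ∃ (Ω : Type) (_ : MeasurableSpace Ω) (μ : Measure Ω),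
    Nonempty (StrongDual ℝ X ≃ₗᵢ[ℝ] Lp ℝ 1 μ)

/-!
Transport the `eᵢ*` to `L₁(μ)`. An extreme point `f` of the unit ball of `L₁(μ)` cannot be split
as `f = f 1_s + f 1_sᶜ` with both pieces nonzero (their norms add up to `‖f‖ = 1`), so `f` lives
on `s` or on `sᶜ` for every measurable `s`. Taking `s = {f ≥ 0}` shows that `f` has constant sign;
taking `s = {g < f}` for two nonnegative extreme points shows that they are comparable, hence
equal (same norm), or disjointly supported. Thus extreme points `f ≠ ±g` have disjoint supports,
and on disjointly supported functions the `L₁`-norm is additive.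
-/

open Set Metric

theorem eq_norm_smul_of_add_eq_of_mem_extremePoints_closedBall {E : Type*}
    [NormedAddCommGroup E] [NormedSpace ℝ E] {f u v : E}
    (hf : f ∈ extremePoints ℝ (closedBall (0 : E) 1)) (huv : u + v = f)
    (hnorm : ‖u‖ + ‖v‖ ≤ 1) : u = ‖u‖ • f := by
  rcases eq_or_ne u 0 with rfl | hu
  · simp
  have : Nontrivial E := ⟨⟨u, 0, hu⟩⟩
  have hf1 : ‖f‖ = 1 := by simpa using extremePoints_closedBall_subset_sphere hf
  rcases eq_or_ne v 0 with rfl | hv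
  · rw [add_zero] at huv
    rw [huv, hf1, one_smul]
  have hu0 : 0 < ‖u‖ := norm_pos_iff.2 hu
  have hv0 : 0 < ‖v‖ := norm_pos_iff.2 hv
  have hsum : ‖u‖ + ‖v‖ = 1 := le_antisymm hnorm (hf1 ▸ huv ▸ norm_add_le u v)
  have hunit : ∀ w : E, ‖‖w‖⁻¹ • w‖ ≤ 1 := fun w => by
    rw [norm_smul, norm_inv, norm_norm]
    exact inv_mul_le_one
  have hseg : f ∈ openSegment ℝ (‖u‖⁻¹ • u) (‖v‖⁻¹ • v) :=
    ⟨‖u‖, ‖v‖, hu0, hv0, hsum, by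
      rw [smul_smul, smul_smul, mul_inv_cancel₀ hu0.ne', mul_inv_cancel₀ hv0.ne', one_smul,
        one_smul, huv]⟩
  have hfu : ‖u‖⁻¹ • u = f :=
    hf.2 (mem_closedBall_zero_iff.2 (hunit u)) (mem_closedBall_zero_iff.2 (hunit v)) hseg
  rw [← hfu, smul_smul, mul_inv_cancel₀ hu0.ne', one_smul]

theorem LinearIsometryEquiv.map_mem_extremePoints_closedBall {E F : Type*}
    [NormedAddCommGroup E] [NormedSpace ℝ E] [NormedAddCommGroup F] [NormedSpace ℝ F]
    (φ : E ≃ₗᵢ[ℝ] F) {x : E} (hx : x ∈ extremePoints ℝ (closedBall (0 : E) 1)) :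
    φ x ∈ extremePoints ℝ (closedBall (0 : F) 1) := by
  have hball : φ.toLinearEquiv '' closedBall (0 : E) 1 = closedBall 0 1 := by
    simp [φ.image_closedBall]
  rw [← hball, ← image_extremePoints]
  exact ⟨x, hx, rfl⟩

theorem neg_mem_extremePoints_closedBall {E : Type*} [NormedAddCommGroup E] [NormedSpace ℝ E]
    {x : E} (hx : x ∈ extremePoints ℝ (closedBall (0 : E) 1)) :
    -x ∈ extremePoints ℝ (closedBall (0 : E) 1) :=
  (LinearIsometryEquiv.neg ℝ).map_mem_extremePoints_closedBall hx

theorem norm_sum_eq_sum_norm_of_pairwise_eq_zero {ι E : Type*} [Fintype ι]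
    [SeminormedAddCommGroup E] {v : ι → E} (hv : Pairwise fun i j => v i = 0 ∨ v j = 0) :
    ‖∑ i, v i‖ = ∑ i, ‖v i‖ := by
  by_cases h0 : ∀ i, v i = 0
  · simp [h0]
  push Not at h0
  obtain ⟨i, hi⟩ := h0
  have hzero : ∀ j, j ≠ i → v j = 0 := fun j hji => (hv hji).resolve_right hi
  rw [Fintype.sum_eq_single i hzero,
    Fintype.sum_eq_single i fun j hji => by rw [hzero j hji, norm_zero]]

namespace MeasureTheory.L1

variable {α : Type*} [MeasurableSpace α] {μ : Measure α}

theorem norm_sum_eq_sum_norm_of_pairwise_ae_disjoint {ι E : Type*} [Fintype ι]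
    [NormedAddCommGroup E] {f : ι → α →₁[μ] E}
    (hf : Pairwise fun i j => ∀ᵐ x ∂μ, f i x = 0 ∨ f j x = 0) :
    ‖∑ i, f i‖ = ∑ i, ‖f i‖ := by
  have hf' : ∀ᵐ x ∂μ, Pairwise fun i j => f i x = 0 ∨ f j x = 0 := by
    refine ae_all_iff.2 fun i => ae_all_iff.2 fun j => ?_
    by_cases hij : i = j
    · exact .of_forall fun _ h => absurd hij h
    · filter_upwards [hf hij] with x hx _ using hx
  calc ‖∑ i, f i‖ = ∫ x, ∑ i, ‖f i x‖ ∂μ := by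
        rw [norm_eq_integral_norm]
        refine integral_congr_ae ?_
        filter_upwards [Lp.coeFn_fun_finsetSum Finset.univ f, hf'] with x hsum hx
        rw [hsum, norm_sum_eq_sum_norm_of_pairwise_eq_zero hx]
    _ = ∑ i, ∫ x, ‖f i x‖ ∂μ := integral_finsetSum _ fun i _ => (integrable_coeFn (f i)).norm
    _ = ∑ i, ‖f i‖ := by simp only [norm_eq_integral_norm]

theorem norm_eq_integral_of_ae_nonneg {f : α →₁[μ] ℝ} (hf : ∀ᵐ x ∂μ, 0 ≤ f x) :
    ‖f‖ = ∫ x, f x ∂μ := by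
  rw [norm_eq_integral_norm]
  refine integral_congr_ae ?_
  filter_upwards [hf] with x hx using Real.norm_of_nonneg hx

theorem eq_of_ae_le_of_norm_eq {u v : α →₁[μ] ℝ} (hu : ∀ᵐ x ∂μ, 0 ≤ u x)
    (huv : ∀ᵐ x ∂μ, u x ≤ v x) (hnorm : ‖u‖ = ‖v‖) : u = v := by
  have hv : ∀ᵐ x ∂μ, 0 ≤ v x := by
    filter_upwards [hu, huv] with x hux huvx using hux.trans huvx
  rw [norm_eq_integral_of_ae_nonneg hu, norm_eq_integral_of_ae_nonneg hv] at hnorm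
  exact Lp.ext ((integral_eq_iff_of_ae_le (integrable_coeFn u) (integrable_coeFn v) huv).1 hnorm)

variable {f g : α →₁[μ] ℝ}

theorem ae_eq_zero_on_or_compl_of_mem_extremePoints
    (hf : f ∈ extremePoints ℝ (closedBall (0 : α →₁[μ] ℝ) 1)) {s : Set α}
    (hs : MeasurableSet s) :
    (∀ᵐ x ∂μ, x ∈ s → f x = 0) ∨ (∀ᵐ x ∂μ, x ∉ s → f x = 0) := by
  have hfi := integrable_coeFn f
  set u := (hfi.indicator hs).toL1 _
  set v := (hfi.indicator hs.compl).toL1 _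
  have huv : u + v = f := by
    refine Lp.ext ?_
    filter_upwards [Lp.coeFn_add u v, (hfi.indicator hs).coeFn_toL1,
      (hfi.indicator hs.compl).coeFn_toL1] with x hsum hux hvx
    rw [hsum, Pi.add_apply, hux, hvx, indicator_self_add_compl_apply]
  have hnorm : ‖u‖ + ‖v‖ ≤ 1 := by
    rw [norm_of_fun_eq_integral_norm, norm_of_fun_eq_integral_norm]
    simp only [norm_indicator_eq_indicator_norm]
    rw [integral_indicator hs, integral_indicator hs.compl, integral_add_compl hs hfi.norm,
      ← norm_eq_integral_norm]
    exact mem_closedBall_zero_iff.1 hf.1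
  have hu := eq_norm_smul_of_add_eq_of_mem_extremePoints_closedBall hf huv hnorm
  have hrestrict : ∀ᵐ x ∂μ, s.indicator f x = ‖u‖ * f x := by
    filter_upwards [(hfi.indicator hs).coeFn_toL1, Lp.coeFn_smul ‖u‖ f] with x hux hsmul
    rw [← hux, ← smul_eq_mul, ← Pi.smul_apply, ← hsmul, ← hu]
  rcases eq_or_ne ‖u‖ 0 with h0 | h0
  · left
    filter_upwards [hrestrict] with x hx hxs
    rwa [indicator_of_mem hxs, h0, zero_mul] at hx
  · right
    filter_upwards [hrestrict] with x hx hxs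
    rw [indicator_of_notMem hxs] at hx
    exact (mul_eq_zero.1 hx.symm).resolve_left h0

theorem ae_nonneg_or_ae_nonpos_of_mem_extremePoints
    (hf : f ∈ extremePoints ℝ (closedBall (0 : α →₁[μ] ℝ) 1)) :
    (∀ᵐ x ∂μ, 0 ≤ f x) ∨ (∀ᵐ x ∂μ, f x ≤ 0) := by
  have hs : MeasurableSet {x | 0 ≤ f x} :=
    measurableSet_le measurable_const (Lp.stronglyMeasurable f).measurable
  rcases ae_eq_zero_on_or_compl_of_mem_extremePoints hf hs with h | h
  · right
    filter_upwards [h] with x hx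
    by_cases hxs : 0 ≤ f x
    · exact (hx hxs).le
    · exact (not_le.1 hxs).le
  · left
    filter_upwards [h] with x hx
    by_cases hxs : 0 ≤ f x
    · exact hxs
    · exact (hx hxs).ge

theorem ae_le_or_ae_le_or_ae_disjoint_of_mem_extremePoints
    (hf : f ∈ extremePoints ℝ (closedBall (0 : α →₁[μ] ℝ) 1))
    (hg : g ∈ extremePoints ℝ (closedBall (0 : α →₁[μ] ℝ) 1)) (hg0 : ∀ᵐ x ∂μ, 0 ≤ g x) :
    (∀ᵐ x ∂μ, f x ≤ g x) ∨ (∀ᵐ x ∂μ, g x ≤ f x) ∨ ∀ᵐ x ∂μ, f x = 0 ∨ g x = 0 := by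
  have hs : MeasurableSet {x | g x < f x} :=
    measurableSet_lt (Lp.stronglyMeasurable g).measurable (Lp.stronglyMeasurable f).measurable
  rcases ae_eq_zero_on_or_compl_of_mem_extremePoints hf hs with hfs | hfs
  · left
    filter_upwards [hfs, hg0] with x hx hgx
    by_contra hlt
    rw [not_le] at hlt
    linarith [hx hlt]
  right
  rcases ae_eq_zero_on_or_compl_of_mem_extremePoints hg hs with hgs | hgs
  · right
    filter_upwards [hfs, hgs] with x hfx hgx
    by_cases hx : g x < f x
    · exact Or.inr (hgx hx)
    · exact Or.inl (hfx hx)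
  · left
    filter_upwards [hfs, hgs] with x hfx hgx
    by_cases hx : g x < f x
    · exact hx.le
    · rw [hfx hx, hgx hx]

theorem ae_disjoint_of_mem_extremePoints_of_ae_nonneg
    (hf : f ∈ extremePoints ℝ (closedBall (0 : α →₁[μ] ℝ) 1))
    (hg : g ∈ extremePoints ℝ (closedBall (0 : α →₁[μ] ℝ) 1))
    (hf0 : ∀ᵐ x ∂μ, 0 ≤ f x) (hg0 : ∀ᵐ x ∂μ, 0 ≤ g x) (hfg : f ≠ g) :
    ∀ᵐ x ∂μ, f x = 0 ∨ g x = 0 := by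
  have : Nontrivial (α →₁[μ] ℝ) := ⟨⟨f, g, hfg⟩⟩
  have hnorm : ‖f‖ = ‖g‖ := by
    simp only [mem_sphere_zero_iff_norm.1 (extremePoints_closedBall_subset_sphere hf),
      mem_sphere_zero_iff_norm.1 (extremePoints_closedBall_subset_sphere hg)]
  rcases ae_le_or_ae_le_or_ae_disjoint_of_mem_extremePoints hf hg hg0 with h | h | h
  · exact absurd (eq_of_ae_le_of_norm_eq hf0 h hnorm) hfg
  · exact absurd (eq_of_ae_le_of_norm_eq hg0 h hnorm.symm).symm hfg
  · exact h

theorem ae_disjoint_neg_left_iff :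
    (∀ᵐ x ∂μ, (-f) x = 0 ∨ g x = 0) ↔ ∀ᵐ x ∂μ, f x = 0 ∨ g x = 0 := by
  refine eventually_congr ?_
  filter_upwards [Lp.coeFn_neg f] with x hx
  rw [hx, Pi.neg_apply, neg_eq_zero]

theorem ae_disjoint_neg_right_iff :
    (∀ᵐ x ∂μ, f x = 0 ∨ (-g) x = 0) ↔ ∀ᵐ x ∂μ, f x = 0 ∨ g x = 0 := by
  refine eventually_congr ?_
  filter_upwards [Lp.coeFn_neg g] with x hx
  rw [hx, Pi.neg_apply, neg_eq_zero]

theorem ae_nonneg_or_ae_nonneg_neg_of_mem_extremePoints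
    (hf : f ∈ extremePoints ℝ (closedBall (0 : α →₁[μ] ℝ) 1)) :
    (∀ᵐ x ∂μ, 0 ≤ f x) ∨ ∀ᵐ x ∂μ, 0 ≤ (-f) x := by
  refine (ae_nonneg_or_ae_nonpos_of_mem_extremePoints hf).imp id fun h => ?_
  filter_upwards [h, Lp.coeFn_neg f] with x hx hneg
  rw [hneg, Pi.neg_apply, neg_nonneg]
  exact hx

theorem ae_disjoint_of_mem_extremePoints
    (hf : f ∈ extremePoints ℝ (closedBall (0 : α →₁[μ] ℝ) 1))
    (hg : g ∈ extremePoints ℝ (closedBall (0 : α →₁[μ] ℝ) 1))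
    (hfg : f ≠ g) (hfg' : f ≠ -g) : ∀ᵐ x ∂μ, f x = 0 ∨ g x = 0 := by
  have hleft : ∀ {f : α →₁[μ] ℝ}, f ∈ extremePoints ℝ (closedBall (0 : α →₁[μ] ℝ) 1) →
      (∀ᵐ x ∂μ, 0 ≤ f x) → f ≠ g → f ≠ -g → ∀ᵐ x ∂μ, f x = 0 ∨ g x = 0 := by
    intro f hf hf0 hfg hfg'
    rcases ae_nonneg_or_ae_nonneg_neg_of_mem_extremePoints hg with hg0 | hg0
    · exact ae_disjoint_of_mem_extremePoints_of_ae_nonneg hf hg hf0 hg0 hfg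
    · exact ae_disjoint_neg_right_iff.1
        (ae_disjoint_of_mem_extremePoints_of_ae_nonneg hf (neg_mem_extremePoints_closedBall hg)
          hf0 hg0 hfg')
  rcases ae_nonneg_or_ae_nonneg_neg_of_mem_extremePoints hf with hf0 | hf0
  · exact hleft hf hf0 hfg hfg'
  · refine ae_disjoint_neg_left_iff.1 (hleft (neg_mem_extremePoints_closedBall hf) hf0 ?_ ?_)
    · rwa [ne_eq, neg_eq_iff_eq_neg]
    · rwa [ne_eq, neg_inj]

end MeasureTheory.L1

theorem stmt_15_general {X : Type*} [NormedAddCommGroup X] [NormedSpace ℝ X]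
    (hX : IsL1Predual X) (e : ℕ → StrongDual ℝ X)
    (hext : ∀ n, e n ∈ Set.extremePoints ℝ (Metric.closedBall (0 : StrongDual ℝ X) 1))
    (hinj : Function.Injective e)
    (hsym : ∀ i j, e i ≠ -e j) :
    ∀ (n : ℕ) (a : Fin n → ℝ), ‖∑ i, a i • e i‖ = ∑ i, |a i| := by
  obtain ⟨Ω, _, μ, ⟨φ⟩⟩ := hX
  intro n a
  have hF : ∀ i, φ (e i) ∈ extremePoints ℝ (closedBall 0 1) := fun i =>
    φ.map_mem_extremePoints_closedBall (hext i)
  have hnorm : ∀ i, ‖φ (e i)‖ = 1 := fun i => by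
    have : Nontrivial (Lp ℝ 1 μ) := ⟨⟨φ (e 0), φ (e 1), φ.injective.ne (hinj.ne zero_ne_one)⟩⟩
    simpa using extremePoints_closedBall_subset_sphere (hF i)
  have hdisj : Pairwise fun i j : Fin n =>
      ∀ᵐ x ∂μ, (a i • φ (e i)) x = 0 ∨ (a j • φ (e j)) x = 0 := by
    intro i j hij
    have hdisj := L1.ae_disjoint_of_mem_extremePoints (hF i) (hF j)
      (φ.injective.ne (hinj.ne (Fin.val_injective.ne hij)))
      (fun h => hsym i j (φ.injective (by rw [h, map_neg])))
    filter_upwards [hdisj, Lp.coeFn_smul (a i) (φ (e i)), Lp.coeFn_smul (a j) (φ (e j))]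
      with x hx hi hj
    rw [hi, hj, Pi.smul_apply, Pi.smul_apply, smul_eq_mul, smul_eq_mul]
    rcases hx with h | h <;> simp [h]
  calc ‖∑ i, a i • e i‖ = ‖∑ i, a i • φ (e i)‖ := by simp [← φ.norm_map]
    _ = ∑ i, ‖a i • φ (e i)‖ := L1.norm_sum_eq_sum_norm_of_pairwise_ae_disjoint hdisj
    _ = ∑ i, |a i| := by simp [norm_smul, hnorm]

theorem stmt_15 {X : Type*} [NormedAddCommGroup X] [NormedSpace ℝ X] [CompleteSpace X]
    (hX : IsL1Predual X) (e : ℕ → StrongDual ℝ X)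
    (hext : ∀ n, e n ∈ Set.extremePoints ℝ (Metric.closedBall (0 : StrongDual ℝ X) 1))
    (hinj : Function.Injective e)
    (hsym : ∀ i j, e i ≠ -e j) :
    ∀ (n : ℕ) (a : Fin n → ℝ), ‖∑ i, a i • e i‖ = ∑ i, |a i| :=
  stmt_15_general hX e hext hinj hsym
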